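/- If S is a subloop of a Cayley-Dickson loop Q_n with |S| > 4, then the center of S is exactly {1, -1}; if |S| ≤ 4, then S is abelian and Z(S) = S. -/

import Mathlib

/-- The underlying set of the Cayley-Dickson loop `Q n`:
`Q 0 = {±1}` (encoded as `Bool`, `false = 1`, `true = -1`) and `Q (n+1) = Q n × Bool`,
an element `(x, b)` encoding `(x, 0)` if `b = false` and `(x, 1)` if `b = true`. -/
def Q : ℕ → Type
  | 0 => Bool
  | n+1 => Q n × Bool

namespace Q

def one : ∀ n, Q n
  | 0 => false
  | n+1 => (one n, false)

def neg : ∀ n, Q n → Q n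
  | 0, x => !x
  | n+1, (x, b) => (neg n x, b)

def conj : ∀ n, Q n → Q n
  | 0, x => x
  | n+1, (x, false) => (conj n x, false)
  | n+1, (x, true) => (neg n x, true)

/-- Cayley-Dickson doubling multiplication restricted to the loop:
`(x,0)(y,0) = (xy,0)`, `(x,0)(y,1) = (yx,1)`, `(x,1)(y,0) = (xy*,1)`, `(x,1)(y,1) = (-y*x,0)`. -/
def mul : ∀ n, Q n → Q n → Q n
  | 0, x, y => xor x y
  | n+1, (x, false), (y, false) => (mul n x y, false)
  | n+1, (x, false), (y, true)  => (mul n y x, true)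
  | n+1, (x, true),  (y, false) => (mul n x (conj n y), true)
  | n+1, (x, true),  (y, true)  => (neg n (mul n (conj n y) x), false)

instance (n : ℕ) : One (Q n) := ⟨one n⟩
instance (n : ℕ) : Neg (Q n) := ⟨neg n⟩
instance (n : ℕ) : Mul (Q n) := ⟨mul n⟩
instance (n : ℕ) : Star (Q n) := ⟨conj n⟩
/-- In `Q n` the inverse of `x` is its conjugate `x*`. -/
instance (n : ℕ) : Inv (Q n) := ⟨conj n⟩

instance instDecEq : ∀ n, DecidableEq (Q n)
  | 0 => inferInstanceAs (DecidableEq Bool)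
  | n+1 => letI := instDecEq n; inferInstanceAs (DecidableEq (Q n × Bool))

instance instFintype : ∀ n, Fintype (Q n)
  | 0 => inferInstanceAs (Fintype Bool)
  | n+1 => letI := instFintype n; inferInstanceAs (Fintype (Q n × Bool))

/-- Powers in `Q n` (well defined by diassociativity). -/
def pow {n : ℕ} (x : Q n) : ℕ → Q n
  | 0 => 1
  | k+1 => x * pow x k

/-- The embedding `x ↦ (x, 0)` of `Q n` into `Q (n+1)`. -/
def up {n : ℕ} (x : Q n) : Q (n+1) := (x, false)

/-- The map `x ↦ (x, 1)` from `Q n` into `Q (n+1)`. -/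
def up1 {n : ℕ} (x : Q n) : Q (n+1) := (x, true)

/-- The commutator `[x,y]`, defined by `xy = (yx)[x,y]`. -/
def comm {n : ℕ} (x y : Q n) : Q n := (y * x)⁻¹ * (x * y)

/-- The associator `[x,y,z]`, defined by `(xy)z = (x(yz))[x,y,z]`. -/
def assoc {n : ℕ} (x y z : Q n) : Q n := (x * (y * z))⁻¹ * ((x * y) * z)

/-- A subloop of the Cayley-Dickson loop `Q n`: a subset containing `1` and closed
under multiplication and inverses (= conjugates). -/
structure Subloop (n : ℕ) where
  carrier : Set (Q n)
  one_mem : (1 : Q n) ∈ carrier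
  mul_mem : ∀ ⦃x y : Q n⦄, x ∈ carrier → y ∈ carrier → x * y ∈ carrier
  inv_mem : ∀ ⦃x : Q n⦄, x ∈ carrier → x⁻¹ ∈ carrier

/-- The subloop of `Q n` generated by a set `s`. -/
def closure (n : ℕ) (s : Set (Q n)) : Set (Q n) :=
  ⋂₀ {t : Set (Q n) | s ⊆ t ∧ (1 : Q n) ∈ t ∧
      (∀ x ∈ t, ∀ y ∈ t, x * y ∈ t) ∧ (∀ x ∈ t, x⁻¹ ∈ t)}

end Q

/-- The center of a subloop `S`: elements of `S` that commute and associate with all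
elements of `S`. -/
def Q.center {n : ℕ} (S : Q.Subloop n) : Set (Q n) :=
  {a ∈ S.carrier | (∀ x ∈ S.carrier, a * x = x * a) ∧
    (∀ x ∈ S.carrier, ∀ y ∈ S.carrier,
      a * (x * y) = (a * x) * y ∧ x * (a * y) = (x * a) * y ∧ x * (y * a) = (x * y) * a)}

/-!
Every `x ∈ Q n` other than `±1` satisfies `x * x = -1`, and, by induction along the doubling, the
only elements commuting with it are `±1` and `±x`. So a central element `a ≠ ±1` of `S` forces
`S ⊆ {±1, ±a}` and `|S| ≤ 4`, while a non-commuting pair `x, y` of `S` gives five distinct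
elements `±1, ±x, y` of `S`. If `|S| ≤ 4`, then `S` is commutative and each `a ∈ S` other than
`±1` gives `S ⊆ {±1, ±a}`, a cyclic group of order 4, on which multiplication is associative.
-/

namespace Q

variable {n : ℕ}

/-- Pairs written directly elaborate at type `Q n × Bool`, where the operations of `Q` are not
found; this eliminator presents an element of `Q (n+1)` as `up x` or `up1 x` instead. -/
@[elab_as_elim]
def succCases {motive : Q (n+1) → Sort*} (up : ∀ x : Q n, motive (Q.up x))
    (up1 : ∀ x : Q n, motive (Q.up1 x)) : ∀ x, motive x
  | (x, false) => up x
  | (x, true) => up1 x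

@[simp] theorem one_succ : (1 : Q (n+1)) = up 1 := rfl
@[simp] theorem neg_up (x : Q n) : -up x = up (-x) := rfl
@[simp] theorem neg_up1 (x : Q n) : -up1 x = up1 (-x) := rfl
@[simp] theorem inv_up (x : Q n) : (up x)⁻¹ = up x⁻¹ := rfl
@[simp] theorem inv_up1 (x : Q n) : (up1 x)⁻¹ = up1 (-x) := rfl
@[simp] theorem up_mul_up (x y : Q n) : up x * up y = up (x * y) := rfl
@[simp] theorem up_mul_up1 (x y : Q n) : up x * up1 y = up1 (y * x) := rfl
@[simp] theorem up1_mul_up (x y : Q n) : up1 x * up y = up1 (x * y⁻¹) := rfl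
@[simp] theorem up1_mul_up1 (x y : Q n) : up1 x * up1 y = up (-(y⁻¹ * x)) := rfl

@[simp] theorem up_inj {x y : Q n} : up x = up y ↔ x = y :=
  ⟨congrArg Prod.fst, congrArg up⟩
@[simp] theorem up1_inj {x y : Q n} : up1 x = up1 y ↔ x = y :=
  ⟨congrArg Prod.fst, congrArg up1⟩
@[simp] theorem up_ne_up1 (x y : Q n) : up x ≠ up1 y :=
  fun h => Bool.noConfusion (congrArg Prod.snd h)
@[simp] theorem up1_ne_up (x y : Q n) : up1 x ≠ up y :=
  fun h => Bool.noConfusion (congrArg Prod.snd h)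

protected theorem neg_neg (x : Q n) : - -x = x := by
  induction n with
  | zero => cases x <;> rfl
  | succ n ih => cases x using succCases <;> simp [ih]

instance : InvolutiveNeg (Q n) where
  neg_neg := Q.neg_neg

protected theorem inv_inv (x : Q n) : x⁻¹⁻¹ = x := by
  induction n with
  | zero => cases x <;> rfl
  | succ n ih => cases x using succCases <;> simp [ih]

instance : InvolutiveInv (Q n) where
  inv_inv := Q.inv_inv

protected theorem inv_one : (1 : Q n)⁻¹ = 1 := by
  induction n with
  | zero => rfl
  | succ n ih => simp [ih]

protected theorem inv_neg (x : Q n) : (-x)⁻¹ = -x⁻¹ := by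
  induction n with
  | zero => rfl
  | succ n ih => cases x using succCases <;> simp [ih]

protected theorem mul_one (x : Q n) : x * 1 = x := by
  induction n with
  | zero => cases x <;> rfl
  | succ n ih => cases x using succCases <;> simp [ih, Q.inv_one]

protected theorem one_mul (x : Q n) : 1 * x = x := by
  induction n with
  | zero => cases x <;> rfl
  | succ n ih => cases x using succCases <;> simp [ih, Q.mul_one]

instance : MulOneClass (Q n) where
  one_mul := Q.one_mul
  mul_one := Q.mul_one

theorem neg_mul_and_mul_neg (x y : Q n) : -x * y = -(x * y) ∧ x * -y = -(x * y) := by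
  induction n with
  | zero => cases x <;> cases y <;> exact ⟨rfl, rfl⟩
  | succ n ih =>
    cases x using succCases <;> cases y using succCases <;> simp [ih, Q.inv_neg]

instance : HasDistribNeg (Q n) where
  neg_mul x y := (neg_mul_and_mul_neg x y).1
  mul_neg x y := (neg_mul_and_mul_neg x y).2

protected theorem inv_mul_cancel (x : Q n) : x⁻¹ * x = 1 := by
  induction n with
  | zero => cases x <;> rfl
  | succ n ih => cases x using succCases <;> simp [ih]

theorem mul_left_cancel_and_mul_right_cancel (x : Q n) :
    Function.Injective (x * ·) ∧ Function.Injective (· * x) := by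
  induction n with
  | zero => cases x <;> constructor <;> decide
  | succ n ih =>
    constructor <;> cases x using succCases <;> intro a b h <;>
      cases a using succCases <;> cases b using succCases <;>
      simp_all [(ih _).1.eq_iff, (ih _).2.eq_iff]

instance : IsCancelMul (Q n) where
  mul_left_cancel x := (mul_left_cancel_and_mul_right_cancel x).1
  mul_right_cancel x := (mul_left_cancel_and_mul_right_cancel x).2

theorem one_ne_neg_one : (1 : Q n) ≠ -1 := by
  induction n with
  | zero => decide
  | succ n ih => simpa using ih

theorem neg_ne_self (x : Q n) : -x ≠ x := by
  induction n with
  | zero => revert x; decide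
  | succ n ih => cases x using succCases <;> simpa using ih _

theorem mul_self_eq_neg_one {x : Q n} (h1 : x ≠ 1) (h2 : x ≠ -1) : x * x = -1 := by
  induction n with
  | zero => revert x; decide
  | succ n ih =>
    cases x using succCases with
    | up x => simp_all
    | up1 x => simp [Q.inv_mul_cancel]

theorem inv_eq_self_iff {x : Q n} : x⁻¹ = x ↔ x = 1 ∨ x = -1 := by
  refine ⟨fun h => ?_, ?_⟩
  · by_contra! hx
    have h1 : x * x = 1 := by rw [← Q.inv_mul_cancel x, h]
    exact one_ne_neg_one (h1.symm.trans (mul_self_eq_neg_one hx.1 hx.2))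
  · rintro (rfl | rfl) <;> simp [Q.inv_one, Q.inv_neg]

theorem inv_eq_neg {x : Q n} (h1 : x ≠ 1) (h2 : x ≠ -1) : x⁻¹ = -x :=
  mul_right_cancel (b := x) <| by rw [Q.inv_mul_cancel, neg_mul, mul_self_eq_neg_one h1 h2, neg_neg]

theorem mul_comm_iff {x y : Q n} :
    x * y = y * x ↔ x = 1 ∨ x = -1 ∨ y = 1 ∨ y = -1 ∨ y = x ∨ y = -x := by
  refine ⟨fun h => ?_, by rintro (rfl | rfl | rfl | rfl | rfl | rfl) <;> simp⟩
  induction n with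
  | zero => revert x y; decide
  | succ n ih =>
    cases x using succCases with
    | up x =>
      cases y using succCases with
      | up y => simpa using ih (by simpa using h)
      | up1 y =>
        obtain hx | hx := inv_eq_self_iff.1 (by simpa using h.symm)
        all_goals simp [hx]
    | up1 x =>
      cases y using succCases with
      | up y =>
        obtain hy | hy := inv_eq_self_iff.1 (by simpa using h)
        all_goals simp [hy]
      | up1 y =>
        have h' : y⁻¹ * x = x⁻¹ * y := by simpa using h
        by_cases hx : x = 1 ∨ x = -1
        · obtain rfl | rfl := hx <;>
            simp [Q.inv_one, Q.inv_neg, inv_eq_self_iff] at h' ⊢ <;> tauto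
        by_cases hy : y = 1 ∨ y = -1
        · obtain rfl | rfl := hy <;>
            simp [Q.inv_one, Q.inv_neg, eq_comm (a := x), inv_eq_self_iff] at h' <;> tauto
        rw [not_or] at hx hy
        rw [inv_eq_neg hx.1 hx.2, inv_eq_neg hy.1 hy.2, neg_mul, neg_mul, neg_inj] at h'
        simpa [hx, hy] using ih h'.symm

def cyclic (a : Q n) : Set (Q n) := {1, -1, a, -a}

theorem mul_comm_iff_mem_cyclic {a y : Q n} (h1 : a ≠ 1) (h2 : a ≠ -1) :
    a * y = y * a ↔ y ∈ cyclic a := by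
  simp [cyclic, mul_comm_iff, h1, h2]

theorem ncard_cyclic {a : Q n} (h1 : a ≠ 1) (h2 : a ≠ -1) : (cyclic a).ncard = 4 := by
  refine Set.ncard_eq_four.2 ⟨1, -1, a, -a, one_ne_neg_one, Ne.symm h1, ?_, Ne.symm h2, ?_,
    (neg_ne_self a).symm, rfl⟩
  · rwa [ne_comm, Ne, neg_eq_iff_eq_neg]
  · rwa [Ne, neg_inj, eq_comm]

theorem mul_comm_of_mem_cyclic {a x y : Q n} (hx : x ∈ cyclic a) (hy : y ∈ cyclic a) :
    x * y = y * x := by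
  simp only [cyclic, Set.mem_insert_iff, Set.mem_singleton_iff] at hx hy
  rcases hx with rfl | rfl | rfl | rfl <;> rcases hy with rfl | rfl | rfl | rfl <;> simp

theorem mul_assoc_of_mem_cyclic {a x y z : Q n} (ha : a * a = -1) (hx : x ∈ cyclic a)
    (hy : y ∈ cyclic a) (hz : z ∈ cyclic a) : x * (y * z) = x * y * z := by
  simp only [cyclic, Set.mem_insert_iff, Set.mem_singleton_iff] at hx hy hz
  rcases hx with rfl | rfl | rfl | rfl <;> rcases hy with rfl | rfl | rfl | rfl <;>
    rcases hz with rfl | rfl | rfl | rfl <;> simp [ha]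

section Subloop

variable {S : Subloop n}

theorem Subloop.exists_mem_ne_one_ne_neg_one (h : 2 < S.carrier.ncard) :
    ∃ x ∈ S.carrier, x ≠ 1 ∧ x ≠ -1 := by
  by_contra! hS
  have hsub : S.carrier ⊆ {1, -1} := fun x hx => by
    by_cases h1 : x = 1
    · exact .inl h1
    · exact .inr (hS x hx h1)
  have := Set.ncard_le_ncard hsub
  rw [Set.ncard_pair one_ne_neg_one] at this
  omega

theorem Subloop.neg_one_mem {x : Q n} (hx : x ∈ S.carrier) (h1 : x ≠ 1) (h2 : x ≠ -1) :
    -1 ∈ S.carrier :=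
  mul_self_eq_neg_one h1 h2 ▸ S.mul_mem hx hx

theorem Subloop.cyclic_subset {x : Q n} (hx : x ∈ S.carrier) (h1 : x ≠ 1) (h2 : x ≠ -1) :
    cyclic x ⊆ S.carrier := by
  have hm1 := neg_one_mem hx h1 h2
  rintro y (rfl | rfl | rfl | rfl)
  · exact S.one_mem
  · exact hm1
  · exact hx
  · exact neg_one_mul x ▸ S.mul_mem hm1 hx

theorem Subloop.subset_cyclic {a : Q n} (h1 : a ≠ 1) (h2 : a ≠ -1)
    (h : ∀ x ∈ S.carrier, a * x = x * a) : S.carrier ⊆ cyclic a :=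
  fun x hx => (mul_comm_iff_mem_cyclic h1 h2).1 (h x hx)

theorem Subloop.four_lt_ncard_of_mul_ne {x y : Q n} (hx : x ∈ S.carrier) (hy : y ∈ S.carrier)
    (h : x * y ≠ y * x) : 4 < S.carrier.ncard := by
  have h1 : x ≠ 1 := by rintro rfl; simp at h
  have h2 : x ≠ -1 := by rintro rfl; simp at h
  have hy' : y ∉ cyclic x := fun hy' => h ((mul_comm_iff_mem_cyclic h1 h2).2 hy')
  calc 4 < (insert y (cyclic x)).ncard := by
        rw [Set.ncard_insert_of_notMem hy', ncard_cyclic h1 h2]; omega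
    _ ≤ S.carrier.ncard := Set.ncard_le_ncard (Set.insert_subset hy (cyclic_subset hx h1 h2))

theorem mem_center_of_eq_one_or_neg_one {z : Q n} (hz : z ∈ S.carrier) (h : z = 1 ∨ z = -1) :
    z ∈ center S := by
  refine ⟨hz, fun _ _ => ?_, fun _ _ _ _ => ?_⟩ <;> obtain rfl | rfl := h <;> simp

theorem mem_center_of_subset_cyclic {a z : Q n} (ha : a * a = -1) (hS : S.carrier ⊆ cyclic a)
    (hz : z ∈ S.carrier) : z ∈ center S :=
  ⟨hz, fun _ hx => mul_comm_of_mem_cyclic (hS hz) (hS hx), fun _ hx _ hy =>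
    ⟨mul_assoc_of_mem_cyclic ha (hS hz) (hS hx) (hS hy),
      mul_assoc_of_mem_cyclic ha (hS hx) (hS hz) (hS hy),
      mul_assoc_of_mem_cyclic ha (hS hx) (hS hy) (hS hz)⟩⟩

theorem eq_one_or_neg_one_of_mem_center (hS : 4 < S.carrier.ncard) {a : Q n}
    (ha : a ∈ center S) : a = 1 ∨ a = -1 := by
  by_contra! h
  have := Set.ncard_le_ncard (S.subset_cyclic h.1 h.2 ha.2.1)
  rw [ncard_cyclic h.1 h.2] at this
  omega

end Subloop

end Q

/-- If `S` is a subloop of `Q n` with `|S| > 4`, then `Z(S) = {1,-1}`;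
if `|S| ≤ 4`, then `S` is abelian and `Z(S) = S`. -/
theorem Q.center_eq (n : ℕ) (S : Q.Subloop n) :
    (4 < S.carrier.ncard → Q.center S = {(1 : Q n), -1}) ∧
    (S.carrier.ncard ≤ 4 →
      (∀ x ∈ S.carrier, ∀ y ∈ S.carrier, x * y = y * x) ∧ Q.center S = S.carrier) := by
  refine ⟨fun hS => ?_, fun hS => ?_⟩
  · obtain ⟨w, hw, hw1, hw2⟩ := S.exists_mem_ne_one_ne_neg_one (by omega)
    refine Set.Subset.antisymm (fun a ha => Q.eq_one_or_neg_one_of_mem_center hS ha) ?_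
    rintro a (rfl | rfl)
    · exact Q.mem_center_of_eq_one_or_neg_one S.one_mem (.inl rfl)
    · exact Q.mem_center_of_eq_one_or_neg_one (S.neg_one_mem hw hw1 hw2) (.inr rfl)
  · have hcomm : ∀ x ∈ S.carrier, ∀ y ∈ S.carrier, x * y = y * x := fun x hx y hy =>
      by_contra fun h => (S.four_lt_ncard_of_mul_ne hx hy h).not_ge hS
    refine ⟨hcomm, Set.Subset.antisymm (fun a ha => ha.1) fun a ha => ?_⟩
    by_cases h : a = 1 ∨ a = -1
    · exact Q.mem_center_of_eq_one_or_neg_one ha h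
    · rw [not_or] at h
      exact Q.mem_center_of_subset_cyclic (Q.mul_self_eq_neg_one h.1 h.2)
        (S.subset_cyclic h.1 h.2 (hcomm a ha)) ha
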